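/- For every integer sequence X of length n ≥ 1, loss(X) = 2·gap(X) + ((n−1) mod 2), where gap and loss are taken with respect to nb_peak. -/
import Mathlib

/-- The signature of an integer sequence: the word over `{<,=,>}` (encoded as
`Ordering.lt`, `Ordering.eq`, `Ordering.gt`) comparing consecutive elements. -/
def signature (X : List ℤ) : List Ordering :=
  List.zipWith compare X X.tail

/-- The number of peaks of a word `w` over `{<,=,>}`: the number of positions `j`
with `w_j = '>'` such that there is `i < j` with `w_i = '<'` and `w_k = '='`
for all `i < k < j`. -/
noncomputable def nbPeak (w : List Ordering) : ℕ :=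
  {j : ℕ | w[j]? = some Ordering.gt ∧
    ∃ i < j, w[i]? = some Ordering.lt ∧
      ∀ k, i < k → k < j → w[k]? = some Ordering.eq}.ncard

/-- The gap of an integer sequence `X` of length `n` with respect to `nb_peak`:
`⌊(n−1)/2⌋ − nb_peak(X)`. -/
noncomputable def gap (X : List ℤ) : ℕ :=
  (X.length - 1) / 2 - nbPeak (signature X)

/-- The minimum length of an integer sequence having exactly `r` peaks. -/
noncomputable def minLen (r : ℕ) : ℕ :=
  sInf {m : ℕ | ∃ Y : List ℤ, Y ≠ [] ∧ Y.length = m ∧ nbPeak (signature Y) = r}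

/-- The loss of an integer sequence `X` of length `n` with respect to `nb_peak`:
`n − m`, where `m` is the minimum length of an integer sequence with the same
number of peaks as `X`. -/
noncomputable def loss (X : List ℤ) : ℕ :=
  X.length - minLen (nbPeak (signature X))

/- ### Auxiliary material -/

def IsPeak (w : List Ordering) (j : ℕ) : Prop :=
  w[j]? = some Ordering.gt ∧
    ∃ i < j, w[i]? = some Ordering.lt ∧
      ∀ k, i < k → k < j → w[k]? = some Ordering.eq

lemma nbPeak_eq_ncard (w : List Ordering) : nbPeak w = {j | IsPeak w j}.ncard := rfl

lemma IsPeak.lt_length {w : List Ordering} {j : ℕ} (h : IsPeak w j) : j < w.length :=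
  (List.getElem?_eq_some_iff.mp h.1).1

lemma IsPeak.one_le {w : List Ordering} {j : ℕ} (h : IsPeak w j) : 1 ≤ j := by
  obtain ⟨_, i, hi, _⟩ := h; omega

lemma peakSet_finite (w : List Ordering) : {j | IsPeak w j}.Finite := by
  apply Set.Finite.subset (Set.finite_Iio w.length)
  intro j hj
  exact hj.lt_length

lemma IsPeak.add_two_le {w : List Ordering} {j j' : ℕ} (hj : IsPeak w j)
    (hj' : IsPeak w j') (h : j < j') : j + 2 ≤ j' := by
  by_contra hc
  obtain ⟨hgt', i, hi, hlt, hbet⟩ := hj'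
  rcases Nat.lt_or_ge i j with hij | hij
  · have := hbet j hij h
    rw [hj.1] at this
    simp at this
  · have : i = j := by omega
    rw [this, hj.1] at hlt
    simp at hlt

lemma nbPeak_le_half (w : List Ordering) : nbPeak w ≤ w.length / 2 := by
  rw [nbPeak_eq_ncard]
  have hinj : Set.InjOn (fun j => (j - 1) / 2) {j | IsPeak w j} := by
    intro a ha b hb hab
    simp only at hab
    rcases Nat.lt_trichotomy a b with h | h | h
    · have := ha.add_two_le hb h; have := ha.one_le; omega
    · exact h
    · have := hb.add_two_le ha h; have := hb.one_le; omega
  calc {j | IsPeak w j}.ncard = ((fun j => (j - 1) / 2) '' {j | IsPeak w j}).ncard :=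
        (Set.ncard_image_of_injOn hinj).symm
    _ ≤ (Set.Iio (w.length / 2)).ncard := by
        apply Set.ncard_le_ncard _ (Set.finite_Iio _)
        rintro _ ⟨j, hj, rfl⟩
        have h1 := hj.one_le
        have h2 := hj.lt_length
        simp only [Set.mem_Iio]
        omega
    _ = w.length / 2 := by
        rw [← Nat.card_coe_set_eq]; simp [Nat.card_eq_fintype_card]

lemma nbPeak_nil : nbPeak [] = 0 := by
  rw [nbPeak_eq_ncard]
  convert Set.ncard_empty ℕ
  ext j
  simp [IsPeak]

lemma isPeak_cons_cons_iff {w : List Ordering} {j : ℕ} :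
    IsPeak (Ordering.lt :: Ordering.gt :: w) j ↔ j = 1 ∨ ∃ j₀, IsPeak w j₀ ∧ j = j₀ + 2 := by
  constructor
  · rintro ⟨hgt, i, hi, hlt, hbet⟩
    match j, i with
    | 0, _ => simp at hgt
    | 1, _ => exact Or.inl rfl
    | (j₀+2), 0 =>
        have := hbet 1 (by omega) (by omega)
        simp at this
    | (j₀+2), 1 => simp at hlt
    | (j₀+2), (i₀+2) =>
        refine Or.inr ⟨j₀, ⟨by simpa using hgt, i₀, by omega, by simpa using hlt, ?_⟩, rfl⟩
        intro k hk1 hk2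
        have := hbet (k+2) (by omega) (by omega)
        simpa using this
  · rintro (rfl | ⟨j₀, ⟨hgt, i₀, hi₀, hlt, hbet⟩, rfl⟩)
    · exact ⟨by simp, 0, by omega, by simp, by omega⟩
    · refine ⟨by simpa using hgt, i₀ + 2, by omega, by simpa using hlt, ?_⟩
      intro k hk1 hk2
      match k with
      | (k₀+2) =>
          have := hbet k₀ (by omega) (by omega)
          simpa using this

lemma nbPeak_cons_cons (w : List Ordering) :
    nbPeak (Ordering.lt :: Ordering.gt :: w) = nbPeak w + 1 := by
  rw [nbPeak_eq_ncard, nbPeak_eq_ncard]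
  have hset : {j | IsPeak (Ordering.lt :: Ordering.gt :: w) j}
      = insert 1 ((· + 2) '' {j | IsPeak w j}) := by
    ext j
    simp only [Set.mem_setOf_eq, Set.mem_insert_iff, Set.mem_image, isPeak_cons_cons_iff]
    constructor
    · rintro (h | ⟨j₀, h, rfl⟩)
      · exact Or.inl h
      · exact Or.inr ⟨j₀, h, rfl⟩
    · rintro (h | ⟨j₀, h, rfl⟩)
      · exact Or.inl h
      · exact Or.inr ⟨j₀, h, rfl⟩
  rw [hset]
  rw [Set.ncard_insert_of_notMem ?notmem ?fin]
  case notmem =>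
    rintro ⟨j₀, _, h⟩
    simp only at h
    omega
  case fin =>
    exact (peakSet_finite w).image _
  rw [Set.ncard_image_of_injOn (fun a _ b _ h => by omega)]

/-- The alternating sequence `0,1,0,1,…,0` of length `2r+1`, with `r` peaks. -/
def altSeq : ℕ → List ℤ
  | 0 => [0]
  | r + 1 => 0 :: 1 :: altSeq r

lemma altSeq_length (r : ℕ) : (altSeq r).length = 2 * r + 1 := by
  induction r with
  | zero => rfl
  | succ n ih => simp [altSeq, ih]; omega

lemma altSeq_eq_cons (r : ℕ) : ∃ t, altSeq r = 0 :: t := by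
  cases r with
  | zero => exact ⟨[], rfl⟩
  | succ n => exact ⟨1 :: altSeq n, rfl⟩

lemma altSeq_ne_nil (r : ℕ) : altSeq r ≠ [] := by
  obtain ⟨t, ht⟩ := altSeq_eq_cons r
  simp [ht]

lemma nbPeak_altSeq (r : ℕ) : nbPeak (signature (altSeq r)) = r := by
  induction r with
  | zero =>
      show nbPeak (signature [0]) = 0
      simp [signature, nbPeak_nil]
  | succ n ih =>
      obtain ⟨t, ht⟩ := altSeq_eq_cons n
      have hsig : signature (altSeq (n + 1))
          = Ordering.lt :: Ordering.gt :: signature (altSeq n) := by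
        show signature (0 :: 1 :: altSeq n) = _
        rw [ht]
        simp [signature, List.zipWith]
        constructor <;> decide
      rw [hsig, nbPeak_cons_cons, ih]

lemma signature_length {Y : List ℤ} (hY : Y ≠ []) :
    (signature Y).length = Y.length - 1 := by
  cases Y with
  | nil => simp at hY
  | cons a t => simp [signature]

lemma minLen_eq (r : ℕ) : minLen r = 2 * r + 1 := by
  have hmem : 2 * r + 1 ∈ {m : ℕ | ∃ Y : List ℤ, Y ≠ [] ∧ Y.length = m ∧
      nbPeak (signature Y) = r} :=
    ⟨altSeq r, altSeq_ne_nil r, altSeq_length r, nbPeak_altSeq r⟩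
  apply le_antisymm (Nat.sInf_le hmem)
  apply le_csInf ⟨_, hmem⟩
  rintro m ⟨Y, hY, rfl, hpk⟩
  have h1 : 1 ≤ Y.length := List.length_pos_iff.mpr hY
  have h2 := nbPeak_le_half (signature Y)
  rw [signature_length hY, hpk] at h2
  omega

/-- For every integer sequence `X` of length `n ≥ 1`,
`loss(X) = 2·gap(X) + ((n−1) mod 2)`, where gap and loss are taken with
respect to `nb_peak`. -/
theorem loss_eq_two_gap_add (X : List ℤ) (hX : X ≠ []) :
    loss X = 2 * gap X + (X.length - 1) % 2 := by
  have h1 : 1 ≤ X.length := List.length_pos_iff.mpr hX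
  have h2 := nbPeak_le_half (signature X)
  rw [signature_length hX] at h2
  rw [loss, gap, minLen_eq]
  omega
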